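/- arXiv:math/0501437 — 13 statements merged into one kernel-verified Lean document; each statement's English description precedes it below -/
import Mathlib

section
/- Let M be a commutative monoid satisfying the refinement property, and let a, b, c be elements of M with n a positive integer. Then a + b = n·c if and only if there exist elements x_0, x_1, ..., x_n of M such that a = Σ_{k=0}^{n} k·x_k, b = Σ_{k=0}^{n} (n-k)·x_k, and c = Σ_{k=0}^{n} x_k. -/
/-! Induction on `n`. Refining `a + b = n • c + c` gives `a = a' + u`, `b = b' + v` with
`a' + b' = n • c` and `u + v = c`. The induction hypothesis writes `c = ∑ yₖ`, and refining
`u + v = ∑ yₖ` splits every `yₖ = zₖ + wₖ`; then `x'ₖ = zₖ₋₁ + wₖ` works for `n + 1`, the `z`-parts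
gaining one unit of weight in `a` and the `w`-parts one unit in `b`. -/

open Finset

/-- The refinement property for a commutative monoid. -/
def HasRefinement (M : Type*) [AddCommMonoid M] : Prop :=
  ∀ a₀ a₁ b₀ b₁ : M, a₀ + a₁ = b₀ + b₁ →
    ∃ c₀₀ c₀₁ c₁₀ c₁₁ : M,
      a₀ = c₀₀ + c₀₁ ∧ a₁ = c₁₀ + c₁₁ ∧ b₀ = c₀₀ + c₁₀ ∧ b₁ = c₀₁ + c₁₁

section

variable {M : Type*} [AddCommMonoid M]

theorem HasRefinement.exists_of_add_eq_sum (hM : HasRefinement M) {ι : Type*} {s : Finset ι}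
    (hs : s.Nonempty) {u v : M} {y : ι → M} (h : u + v = ∑ i ∈ s, y i) :
    ∃ z w : ι → M, (∀ i ∈ s, y i = z i + w i) ∧ u = ∑ i ∈ s, z i ∧ v = ∑ i ∈ s, w i := by
  classical
  induction hs using Finset.Nonempty.cons_induction generalizing u v with
  | singleton i => exact ⟨fun _ => u, fun _ => v, by simpa using h.symm, by simp, by simp⟩
  | cons i s hi hs ih =>
    rw [sum_cons, add_comm (y i)] at h
    obtain ⟨u', ui, v', vi, rfl, rfl, hs_eq, hi_eq⟩ := hM u v _ _ h
    obtain ⟨z, w, hzw, rfl, rfl⟩ := ih hs_eq.symm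
    refine ⟨Function.update z i ui, Function.update w i vi, ?_, ?_, ?_⟩
    · intro j hj
      rcases mem_cons.mp hj with rfl | hj
      · simpa using hi_eq
      · simpa [ne_of_mem_of_not_mem hj hi] using hzw j hj
    · rw [sum_cons, Function.update_self, sum_update_of_notMem hi, add_comm]
    · rw [sum_cons, Function.update_self, sum_update_of_notMem hi, add_comm]

theorem Fin.sum_nsmul_cons_add_snoc {n : ℕ} (g : ℕ → ℕ) (z w : Fin (n + 1) → M) :
    ∑ j : Fin (n + 2), g j • (Fin.cons 0 z + Fin.snoc w 0 : Fin (n + 2) → M) j =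
      ∑ k : Fin (n + 1), g (k + 1) • z k + ∑ k : Fin (n + 1), g k • w k := by
  simp only [Pi.add_apply, smul_add, sum_add_distrib]
  rw [Fin.sum_univ_succ (fun j => g j • (Fin.cons 0 z : Fin (n + 2) → M) j),
    Fin.sum_univ_castSucc (fun j => g j • (Fin.snoc w 0 : Fin (n + 2) → M) j)]
  simp

theorem sum_nsmul_add_sum_tsub_nsmul (n : ℕ) (x : Fin (n + 1) → M) :
    ∑ k : Fin (n + 1), (k : ℕ) • x k + ∑ k : Fin (n + 1), (n - (k : ℕ)) • x k =
      n • ∑ k, x k := by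
  rw [← sum_add_distrib, smul_sum]
  refine sum_congr rfl fun k _ => ?_
  rw [← add_nsmul, Nat.add_sub_cancel' k.is_le]

theorem HasRefinement.exists_of_add_eq_nsmul (hM : HasRefinement M) {a b c : M} {n : ℕ}
    (hn : 0 < n) (h : a + b = n • c) :
    ∃ x : Fin (n + 1) → M,
      a = ∑ k : Fin (n + 1), (k : ℕ) • x k ∧
      b = ∑ k : Fin (n + 1), (n - (k : ℕ)) • x k ∧
      c = ∑ k : Fin (n + 1), x k := by
  induction n, hn using Nat.le_induction generalizing a b with
  | base => exact ⟨![b, a], by simp, by simp, by simpa [add_comm] using h.symm⟩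
  | succ n _ ih =>
    rw [succ_nsmul] at h
    obtain ⟨a', u, b', v, rfl, rfl, hab', huv⟩ := hM a b _ _ h
    obtain ⟨y, rfl, rfl, hc⟩ := ih hab'.symm
    obtain ⟨z, w, hzw, rfl, rfl⟩ := hM.exists_of_add_eq_sum univ_nonempty (huv.symm.trans hc)
    obtain rfl : y = z + w := funext fun k => hzw k (mem_univ k)
    refine ⟨Fin.cons 0 z + Fin.snoc w 0, ?_, ?_, ?_⟩
    · rw [Fin.sum_nsmul_cons_add_snoc (fun k => k)]
      simp only [Pi.add_apply, smul_add, succ_nsmul, sum_add_distrib]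
      abel
    · rw [Fin.sum_nsmul_cons_add_snoc (fun k => n + 1 - k)]
      have hsub (k : Fin (n + 1)) : n + 1 - (k : ℕ) = n - k + 1 := Nat.succ_sub k.is_le
      simp only [hsub, Nat.add_sub_add_right, Pi.add_apply, smul_add, succ_nsmul, sum_add_distrib]
      abel
    · rw [huv]
      simpa using (Fin.sum_nsmul_cons_add_snoc (fun _ => 1) z w).symm

end

theorem stmt0 {M : Type*} [AddCommMonoid M] (hM : HasRefinement M)
    (a b c : M) (n : ℕ) (hn : 0 < n) :
    a + b = n • c ↔
      ∃ x : Fin (n + 1) → M,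
        a = ∑ k : Fin (n + 1), (k : ℕ) • x k ∧
        b = ∑ k : Fin (n + 1), (n - (k : ℕ)) • x k ∧
        c = ∑ k : Fin (n + 1), x k := by
  refine ⟨hM.exists_of_add_eq_nsmul hn, ?_⟩
  rintro ⟨x, rfl, rfl, rfl⟩
  exact sum_nsmul_add_sum_tsub_nsmul n x
end

section
/- Let M be a refinement monoid with algebraic preordering ≤ (x ≤ y iff there exists z with x + z = y), let a, b, c ∈ M, and let n be a positive integer. If a + c = b + c, then there exist elements d, u, v of M such that a = d + u, b = d + v, and n·u ≤ c and n·v ≤ c. -/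
/-- The algebraic preordering on a commutative monoid: `x ≤ y` iff `∃ z, x + z = y`. -/
def algLE {M : Type*} [AddCommMonoid M] (x y : M) : Prop := ∃ z, x + z = y

namespace HasRefinement

variable {M : Type*} [AddCommMonoid M]

theorem exists_decomp_of_add_eq_add (hM : HasRefinement M) {a b c : M} (h : a + c = b + c) :
    ∃ d u v c' : M, a = d + u ∧ b = d + v ∧ u + c' = c ∧ v + c' = c := by
  obtain ⟨d, u, v, c', ha, hc, hb, hc'⟩ := hM a c b c h
  exact ⟨d, u, v, c', ha, hb, hc'.symm, hc.symm⟩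

theorem exists_nsmul_algLE_of_add_eq_add (hM : HasRefinement M) (n : ℕ) {a b c : M}
    (h : a + c = b + c) :
    ∃ d u v : M, a = d + u ∧ b = d + v ∧ algLE (n • u) c ∧ algLE (n • v) c := by
  induction n generalizing a b c with
  | zero => exact ⟨0, a, b, (zero_add a).symm, (zero_add b).symm, ⟨c, by simp⟩, ⟨c, by simp⟩⟩
  | succ n ih =>
    obtain ⟨d, u, v, c', ha, hb, hu, hv⟩ := hM.exists_decomp_of_add_eq_add h
    obtain ⟨e, u', v', hu', hv', ⟨s, hs⟩, ⟨t, ht⟩⟩ := ih (hu.trans hv.symm)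
    refine ⟨d + e, u', v', ?_, ?_, ⟨e + s, ?_⟩, ⟨e + t, ?_⟩⟩
    · rw [ha, hu', add_assoc]
    · rw [hb, hv', add_assoc]
    · rw [← hu, hu', ← hs, succ_nsmul]; abel
    · rw [← hv, hv', ← ht, succ_nsmul]; abel

end HasRefinement

theorem stmt1_general {M : Type*} [AddCommMonoid M] (hM : HasRefinement M)
    (a b c : M) (n : ℕ) (h : a + c = b + c) :
    ∃ d u v : M, a = d + u ∧ b = d + v ∧ algLE (n • u) c ∧ algLE (n • v) c :=
  hM.exists_nsmul_algLE_of_add_eq_add n h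

theorem stmt1 {M : Type*} [AddCommMonoid M] (hM : HasRefinement M)
    (a b c : M) (n : ℕ) (hn : 0 < n) (h : a + c = b + c) :
    ∃ d u v : M, a = d + u ∧ b = d + v ∧ algLE (n • u) c ∧ algLE (n • v) c :=
  stmt1_general hM a b c n h
end

section
/- Let M be a refinement monoid with algebraic preordering ≤, let a, b, c ∈ M, and let n be a positive integer. If a + c ≤ b + c, then there exists d ∈ M such that n·d ≤ c and a ≤ b + d. -/
/-!
Refining `x + c = y + c` as `x = s + d`, `y = s + t`, `c = t + w = d + w` produces a new
cancellation instance `d + w = t + w` with `d ≤ x` and `d + w = c`. Iterating `n` times yields a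
decreasing chain `dₙ ≤ ⋯ ≤ d₁ ≤ x` whose terms fit disjointly into `c`, so `n • dₙ ≤ c`,
while `x ≤ y + dₙ` is carried along the chain.
-/

section

variable {M : Type*} [AddCommMonoid M]

theorem algLE_refl (x : M) : algLE x x := ⟨0, add_zero x⟩

theorem algLE_add_right (x y : M) : algLE x (x + y) := ⟨y, rfl⟩

theorem algLE_add_left (x y : M) : algLE x (y + x) := ⟨y, add_comm x y⟩

theorem algLE.trans {x y z : M} (hxy : algLE x y) (hyz : algLE y z) : algLE x z := by
  obtain ⟨u, rfl⟩ := hxy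
  obtain ⟨v, rfl⟩ := hyz
  exact ⟨u + v, (add_assoc x u v).symm⟩

theorem algLE.add {x y u v : M} (hxy : algLE x y) (huv : algLE u v) :
    algLE (x + u) (y + v) := by
  obtain ⟨p, rfl⟩ := hxy
  obtain ⟨q, rfl⟩ := huv
  exact ⟨p + q, (add_add_add_comm x p u q).symm⟩

theorem HasRefinement.exists_nsmul_algLE_of_add_eq_add_s2 (hM : HasRefinement M) (n : ℕ) :
    ∀ {x y c : M}, x + c = y + c →
      ∃ d : M, algLE d x ∧ algLE (n • d) c ∧ algLE x (y + d) := by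
  induction n with
  | zero => exact fun {x y c} _ ↦ ⟨x, algLE_refl x, ⟨c, by simp⟩, algLE_add_left x y⟩
  | succ n ih =>
    intro x y c hxyc
    obtain ⟨s, d, t, w, rfl, hc, rfl, hc'⟩ := hM x c y c hxyc
    obtain ⟨e, hed, hew, hdte⟩ := ih (hc'.symm.trans hc)
    refine ⟨e, hed.trans (algLE_add_left d s), ?_, ?_⟩
    · rw [succ_nsmul', hc']
      exact hed.add hew
    · rw [add_assoc]
      exact (algLE_refl s).add hdte

end

theorem stmt2_general {M : Type*} [AddCommMonoid M] (hM : HasRefinement M)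
    (a b c : M) (n : ℕ) (h : algLE (a + c) (b + c)) :
    ∃ d : M, algLE (n • d) c ∧ algLE a (b + d) := by
  obtain ⟨z, hz⟩ := h
  obtain ⟨d, -, hdc, hd⟩ :=
    hM.exists_nsmul_algLE_of_add_eq_add_s2 n (x := a + z) (by rw [← hz, add_right_comm])
  exact ⟨d, hdc, (algLE_add_right a z).trans hd⟩

theorem stmt2 {M : Type*} [AddCommMonoid M] (hM : HasRefinement M)
    (a b c : M) (n : ℕ) (hn : 0 < n) (h : algLE (a + c) (b + c)) :
    ∃ d : M, algLE (n • d) c ∧ algLE a (b + d) :=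
  stmt2_general hM a b c n h
end

section
/- Let M be a refinement monoid and let U be a lower subset of M (with respect to the algebraic preordering) that generates M as a monoid. If U is cancellative (i.e., for all a, b, c with a + c = b + c ∈ U one has a = b), then M is cancellative. -/
theorem stmt3 {M : Type*} [AddCommMonoid M] (hM : HasRefinement M)
    (U : Set M)
    (hlow : ∀ x ∈ U, ∀ p : M, algLE p x → p ∈ U)
    (hgen : AddSubmonoid.closure U = ⊤)
    (hcanc : ∀ a b c : M, a + c = b + c → a + c ∈ U → a = b) :
    ∀ a b c : M, a + c = b + c → a = b := by
  have key : ∀ c ∈ U, ∀ a b : M, a + c = b + c → a = b := by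
    intro c hc a b h
    obtain ⟨c00, c01, c10, c11, ha, hc1, hb, hc2⟩ := hM a c b c h
    have h01 : c01 = c10 := hcanc c01 c10 c11 (by rw [← hc2, hc1]) (hc2 ▸ hc)
    rw [ha, hb, h01]
  have main : ∀ c : M, c ∈ AddSubmonoid.closure U → ∀ a b : M, a + c = b + c → a = b := by
    intro c hc
    induction hc using AddSubmonoid.closure_induction with
    | mem x hx => exact key x hx
    | zero => intro a b h; simpa using h
    | add x y hx hy ihx ihy =>
        intro a b h
        exact ihx a b (ihy (a + x) (b + x)
          (by rw [← add_assoc, ← add_assoc] at h; exact h))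
  intro a b c h
  exact main c (by rw [hgen]; trivial) a b h
end

section
/- Let M be a commutative monoid, N a refinement monoid, and f : M → N a V-homomorphism. Let U be a lower subset of M generating M as a monoid. If the restriction of f to U is injective, then f is injective. -/
/-- `f` is a V-homomorphism at `c`. -/
def IsVHomAt {M N : Type*} [AddCommMonoid M] [AddCommMonoid N]
    (f : M →+ N) (c : M) : Prop :=
  ∀ ξ η : N, f c = ξ + η → ∃ x y : M, c = x + y ∧ f x = ξ ∧ f y = η

theorem stmt4 {M N : Type*} [AddCommMonoid M] [AddCommMonoid N]
    (hN : HasRefinement N) (f : M →+ N)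
    (hf : ∀ c : M, IsVHomAt f c)
    (U : Set M)
    (hlow : ∀ x ∈ U, ∀ p : M, algLE p x → p ∈ U)
    (hgen : AddSubmonoid.closure U = ⊤)
    (hinj : Set.InjOn f U) :
    Function.Injective f := by
  rcases U.eq_empty_or_nonempty with hU | ⟨u, hu⟩
  · -- If `U = ∅` then `M` is trivial.
    have htriv : ∀ x : M, x = 0 := by
      intro x
      have hx : x ∈ AddSubmonoid.closure U := by rw [hgen]; trivial
      rw [hU, AddSubmonoid.closure_empty, AddSubmonoid.mem_bot] at hx
      exact hx
    intro a b _
    rw [htriv a, htriv b]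
  · have h0U : (0 : M) ∈ U := hlow u hu 0 ⟨u, zero_add u⟩
    -- Key lemma: if `a ∈ U` and `f a = f b` then `a = b`.
    have key : ∀ b : M, ∀ a ∈ U, f a = f b → a = b := by
      intro b
      have hb : b ∈ AddSubmonoid.closure U := by rw [hgen]; trivial
      induction hb using AddSubmonoid.closure_induction with
      | mem v hv => intro a ha hfab; exact hinj ha hv hfab
      | zero => intro a ha hfab; exact hinj ha h0U (by simpa using hfab)
      | add b₁ b₂ hb₁ hb₂ ih₁ ih₂ =>
        intro a ha hfab
        rw [map_add] at hfab
        obtain ⟨x, y, hxy, hfx, hfy⟩ := hf a (f b₁) (f b₂) hfab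
        have hxU : x ∈ U := hlow a ha x ⟨y, hxy.symm⟩
        have hyU : y ∈ U := hlow a ha y ⟨x, by rw [add_comm]; exact hxy.symm⟩
        rw [hxy, ih₁ x hxU hfx, ih₂ y hyU hfy]
    intro a b hfab
    have ha : a ∈ AddSubmonoid.closure U := by rw [hgen]; trivial
    induction ha using AddSubmonoid.closure_induction generalizing b with
    | mem v hv => exact key b v hv hfab
    | zero => exact (key b 0 h0U (by simpa using hfab)).symm ▸ rfl
    | add a₁ a₂ ha₁ ha₂ ih₁ ih₂ =>
      rw [map_add] at hfab
      obtain ⟨x, y, hxy, hfx, hfy⟩ := hf b (f a₁) (f a₂) hfab.symm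
      rw [hxy, ih₁ hfx.symm, ih₂ hfy.symm]
end

section
/- Let M be a conical refinement monoid and define the index Ind_M(x) of x ∈ M as the largest n ∈ ℤ⁺ (or ∞) such that there exists y ∈ M \ {0} with n·y ≤ x (algebraic preordering). Then for all x, y ∈ M: max(Ind_M(x), Ind_M(y)) ≤ Ind_M(x + y) ≤ Ind_M(x) + Ind_M(y). -/
/-- A commutative monoid is conical if `x + y = 0` implies `x = y = 0`. -/
def Conical (M : Type*) [AddCommMonoid M] : Prop :=
  ∀ x y : M, x + y = 0 → x = 0 ∧ y = 0

/-- The index of an element `x`: the supremum in `ℕ∞` of all `n` such that `n • y ≤ x`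
for some nonzero `y`. -/
noncomputable def indexM {M : Type*} [AddCommMonoid M] (x : M) : ℕ∞ :=
  sSup ((fun n : ℕ => (n : ℕ∞)) '' {n : ℕ | ∃ y : M, y ≠ 0 ∧ algLE (n • y) x})

section AlgLE

variable {M : Type*} [AddCommMonoid M]

lemma algLE_trans {a b c : M} (hab : algLE a b) (hbc : algLE b c) : algLE a c := by
  obtain ⟨u, rfl⟩ := hab
  obtain ⟨v, rfl⟩ := hbc
  exact ⟨u + v, (add_assoc _ _ _).symm⟩

lemma algLE_add_right_s6 (a b : M) : algLE a (a + b) := ⟨b, rfl⟩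

lemma algLE_add_left_s6 (a b : M) : algLE b (a + b) := ⟨a, add_comm b a⟩

lemma algLE_add {a b c d : M} (hab : algLE a b) (hcd : algLE c d) :
    algLE (a + c) (b + d) := by
  obtain ⟨u, rfl⟩ := hab
  obtain ⟨v, rfl⟩ := hcd
  exact ⟨u + v, by abel⟩

lemma algLE_nsmul (n : ℕ) {a b : M} (h : algLE a b) : algLE (n • a) (n • b) := by
  obtain ⟨u, rfl⟩ := h
  exact ⟨n • u, (smul_add n a u).symm⟩

lemma succ_nsmul_algLE_add {p w u c : M} (s : ℕ) (hpw : algLE p w) (hpu : algLE p u)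
    (hwc : algLE (s • w) c) : algLE ((s + 1) • p) (u + c) := by
  rw [succ_nsmul, add_comm u c]
  exact algLE_add (algLE_trans (algLE_nsmul s hpw) hwc) hpu

lemma nsmul_algLE_add {p w c : M} (t : ℕ) (v : M) (hpw : algLE p w)
    (hwc : algLE (t • w) c) : algLE (t • p) (v + c) :=
  algLE_trans (algLE_nsmul t hpw) (algLE_trans hwc (algLE_add_left_s6 v c))

end AlgLE

namespace HasRefinement

variable {M : Type*} [AddCommMonoid M]

lemma exists_add_eq_of_algLE_add (hr : HasRefinement M) {a x y : M}
    (h : algLE a (x + y)) : ∃ u v, a = u + v ∧ algLE u x ∧ algLE v y := by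
  obtain ⟨r, hr'⟩ := h
  obtain ⟨c₀₀, c₀₁, c₁₀, c₁₁, ha, -, hx, hy⟩ := hr a r x y hr'
  exact ⟨c₀₀, c₀₁, ha, ⟨c₁₀, hx.symm⟩, ⟨c₁₁, hy.symm⟩⟩

lemma exists_nsmul_split_of_nsmul_algLE_add (hr : HasRefinement M) (n : ℕ) {z : M}
    (hz : z ≠ 0) {x y : M} (h : algLE (n • z) (x + y)) :
    ∃ w : M, w ≠ 0 ∧ algLE w z ∧
      ∃ s t : ℕ, s + t = n ∧ algLE (s • w) x ∧ algLE (t • w) y := by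
  induction n generalizing x y with
  | zero => exact ⟨z, hz, ⟨0, add_zero z⟩, 0, 0, rfl, ⟨x, by simp⟩, ⟨y, by simp⟩⟩
  | succ n ih =>
    obtain ⟨r, hr'⟩ := h
    have hsplit : z + (n • z + r) = x + y := by rw [← hr', succ_nsmul']; abel
    obtain ⟨u, v, c, d, hzuv, hcd, rfl, rfl⟩ := hr z (n • z + r) x y hsplit
    obtain ⟨w, hw, hwz, s, t, rfl, hsw, htw⟩ := ih (x := c) (y := d) ⟨r, hcd⟩
    obtain ⟨p, q, rfl, hpu, hqv⟩ := hr.exists_add_eq_of_algLE_add (hzuv ▸ hwz)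
    by_cases hp : p = 0
    · have hq : q ≠ 0 := by rintro rfl; exact hw (by rw [hp, add_zero])
      have hqw : algLE q (p + q) := algLE_add_left_s6 p q
      refine ⟨q, hq, algLE_trans hqw hwz, s, t + 1, by omega,
        nsmul_algLE_add s u hqw hsw, succ_nsmul_algLE_add t hqw hqv htw⟩
    · have hpw : algLE p (p + q) := algLE_add_right_s6 p q
      refine ⟨p, hp, algLE_trans hpw hwz, s + 1, t, by omega,
        succ_nsmul_algLE_add s hpw hpu hsw, nsmul_algLE_add t v hpw htw⟩

end HasRefinement

section Index

variable {M : Type*} [AddCommMonoid M]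

lemma le_indexM {n : ℕ} {x y : M} (hy : y ≠ 0) (h : algLE (n • y) x) :
    (n : ℕ∞) ≤ indexM x :=
  le_sSup ⟨n, ⟨y, hy, h⟩, rfl⟩

lemma indexM_mono {x x' : M} (h : algLE x x') : indexM x ≤ indexM x' :=
  sSup_le_sSup <| Set.image_mono fun _ ⟨y, hy, hle⟩ => ⟨y, hy, algLE_trans hle h⟩

lemma indexM_add_le (hr : HasRefinement M) (x y : M) :
    indexM (x + y) ≤ indexM x + indexM y := by
  refine sSup_le ?_
  rintro _ ⟨n, ⟨z, hz, hle⟩, rfl⟩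
  obtain ⟨w, hw, -, s, t, rfl, hsw, htw⟩ := hr.exists_nsmul_split_of_nsmul_algLE_add n hz hle
  exact (Nat.cast_add s t).le.trans (add_le_add (le_indexM hw hsw) (le_indexM hw htw))

end Index

theorem stmt6_general {M : Type*} [AddCommMonoid M]
    (hr : HasRefinement M) (x y : M) :
    max (indexM x) (indexM y) ≤ indexM (x + y) ∧
      indexM (x + y) ≤ indexM x + indexM y :=
  ⟨max_le (indexM_mono (algLE_add_right_s6 x y)) (indexM_mono (algLE_add_left_s6 x y)),
    indexM_add_le hr x y⟩

theorem stmt6 {M : Type*} [AddCommMonoid M]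
    (hc : Conical M) (hr : HasRefinement M) (x y : M) :
    max (indexM x) (indexM y) ≤ indexM (x + y) ∧
      indexM (x + y) ≤ indexM x + indexM y :=
  stmt6_general hr x y
end

section
/- Let G be a partially ordered abelian group with the interpolation property, and let U be a directed lower subset of G⁺ generating G as a group, such that the interval [0, u] is lattice-ordered for every u ∈ U. Then G is lattice-ordered. -/
section helpers

variable {G : Type*} [AddCommGroup G] [PartialOrder G]
    [CovariantClass G G (· + ·) (· ≤ ·)]

private lemma mem_lb_pair {a b t : G} (h1 : t ≤ a) (h2 : t ≤ b) :
    t ∈ lowerBounds ({a, b} : Set G) := by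
  rintro s (rfl | rfl) <;> assumption

private lemma my_glb_of_lub {x y z : G} (h : IsLUB ({x, y} : Set G) z) :
    IsGLB ({z - x, z - y} : Set G) 0 := by
  have hx : x ≤ z := h.1 (Set.mem_insert _ _)
  have hy : y ≤ z := h.1 (Set.mem_insert_of_mem _ rfl)
  constructor
  · rintro s (rfl | rfl) <;> simp [sub_nonneg, hx, hy]
  · intro t ht
    have h1 : t ≤ z - x := ht (Set.mem_insert _ _)
    have h2 : t ≤ z - y := ht (Set.mem_insert_of_mem _ rfl)
    have hzt : z - t ∈ upperBounds ({x, y} : Set G) := by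
      rintro s (rfl | rfl)
      · exact le_sub_comm.mp h1
      · exact le_sub_comm.mp h2
    have : z ≤ z - t := h.2 hzt
    exact (le_sub_self_iff z).mp this

private lemma my_isGLB_of_isLUB {x y z : G} (h : IsLUB ({x, y} : Set G) z) :
    IsGLB ({x, y} : Set G) (x + y - z) := by
  have hx : x ≤ z := h.1 (Set.mem_insert _ _)
  have hy : y ≤ z := h.1 (Set.mem_insert_of_mem _ rfl)
  constructor
  · rintro s (rfl | rfl)
    · exact sub_le_iff_le_add.mpr (add_le_add_right hy s)
    · rw [sub_le_iff_le_add, add_comm s z]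
      exact add_le_add_left hx s
  · intro t ht
    have h1 : t ≤ x := ht (Set.mem_insert _ _)
    have h2 : t ≤ y := ht (Set.mem_insert_of_mem _ rfl)
    have : x + y - t ∈ upperBounds ({x, y} : Set G) := by
      rintro s (rfl | rfl)
      · exact le_sub_iff_add_le.mpr (add_le_add_right h2 s)
      · rw [le_sub_iff_add_le, add_comm s t]
        exact add_le_add_left h1 s
    have hz : z ≤ x + y - t := h.2 this
    rw [le_sub_iff_add_le, add_comm t z]
    exact le_sub_iff_add_le.mp hz

private lemma my_lub_criterion {x y z : G} (hx : x ≤ z) (hy : y ≤ z)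
    (h : IsGLB ({z - x, z - y} : Set G) 0) : IsLUB ({x, y} : Set G) z := by
  constructor
  · rintro s (rfl | rfl) <;> assumption
  · intro w hw
    have h1 : x ≤ w := hw (Set.mem_insert _ _)
    have h2 : y ≤ w := hw (Set.mem_insert_of_mem _ rfl)
    have : z - w ≤ 0 := h.2 (mem_lb_pair (sub_le_sub_left h1 z) (sub_le_sub_left h2 z))
    exact sub_nonpos.mp this

private lemma my_lub_add {a b z t : G} (h : IsLUB ({a, b} : Set G) z) :
    IsLUB ({a + t, b + t} : Set G) (z + t) := by
  have ha : a ≤ z := h.1 (Set.mem_insert _ _)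
  have hb : b ≤ z := h.1 (Set.mem_insert_of_mem _ rfl)
  constructor
  · rintro s (rfl | rfl) <;> exact add_le_add_left (by assumption) t
  · intro w hw
    have h1 : a + t ≤ w := hw (Set.mem_insert _ _)
    have h2 : b + t ≤ w := hw (Set.mem_insert_of_mem _ rfl)
    have : z ≤ w - t := h.2 (by
      rintro s (rfl | rfl)
      · exact le_sub_iff_add_le.mpr h1
      · exact le_sub_iff_add_le.mpr h2)
    exact add_le_of_le_sub_right this

variable (hint : ∀ a₀ a₁ b₀ b₁ : G, a₀ ≤ b₀ → a₀ ≤ b₁ → a₁ ≤ b₀ → a₁ ≤ b₁ →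
      ∃ x : G, a₀ ≤ x ∧ a₁ ≤ x ∧ x ≤ b₀ ∧ x ≤ b₁)

include hint

private lemma my_riesz {x b c : G} (hx0 : 0 ≤ x) (hb : 0 ≤ b) (hc : 0 ≤ c)
    (hx : x ≤ b + c) :
    ∃ x1 x2 : G, x = x1 + x2 ∧ 0 ≤ x1 ∧ x1 ≤ b ∧ 0 ≤ x2 ∧ x2 ≤ c := by
  obtain ⟨x1, h1, h2, h3, h4⟩ :=
    hint (x - c) 0 x b (sub_le_self x hc) (sub_le_iff_le_add.mpr hx) hx0 hb
  refine ⟨x1, x - x1, (add_sub_cancel x1 x).symm, h2, h4, sub_nonneg.mpr h3,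
    sub_le_comm.mp h1⟩

private lemma my_glb_add {a b c : G} (hab : IsGLB ({a, b} : Set G) 0)
    (hac : IsGLB ({a, c} : Set G) 0) : IsGLB ({a, b + c} : Set G) 0 := by
  have ha0 : 0 ≤ a := hab.1 (Set.mem_insert _ _)
  have hb0 : 0 ≤ b := hab.1 (Set.mem_insert_of_mem _ rfl)
  have hc0 : 0 ≤ c := hac.1 (Set.mem_insert_of_mem _ rfl)
  constructor
  · rintro s (rfl | rfl)
    · exact ha0
    · exact add_nonneg hb0 hc0
  · intro t ht
    have h1 : t ≤ a := ht (Set.mem_insert _ _)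
    have h2 : t ≤ b + c := ht (Set.mem_insert_of_mem _ rfl)
    obtain ⟨d, hd1, hd2, hd3, hd4⟩ := hint t 0 a (b + c) h1 h2 ha0 (add_nonneg hb0 hc0)
    obtain ⟨d1, d2, hds, hd10, hd1b, hd20, hd2c⟩ := my_riesz hint hd2 hb0 hc0 hd4
    have hd1a : d1 ≤ a := le_trans (by rw [hds]; exact le_add_of_nonneg_right hd20) hd3
    have hd1z : d1 ≤ 0 := hab.2 (mem_lb_pair hd1a hd1b)
    have hd1e : d1 = 0 := le_antisymm hd1z hd10
    have hdd2 : d = d2 := by rw [hds, hd1e, zero_add]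
    have hd2a : d2 ≤ a := hdd2 ▸ hd3
    have hd2z : d2 ≤ 0 := hac.2 (mem_lb_pair hd2a hd2c)
    exact hd1.trans (hdd2 ▸ hd2z)

omit hint

private lemma my_glb_sub {a b c : G} (h : IsGLB ({a, b} : Set G) c) :
    IsGLB ({a - c, b - c} : Set G) 0 := by
  have ha : c ≤ a := h.1 (Set.mem_insert _ _)
  have hb : c ≤ b := h.1 (Set.mem_insert_of_mem _ rfl)
  constructor
  · rintro s (rfl | rfl) <;> simp [sub_nonneg, ha, hb]
  · intro t ht
    have h1 : t ≤ a - c := ht (Set.mem_insert _ _)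
    have h2 : t ≤ b - c := ht (Set.mem_insert_of_mem _ rfl)
    have : t + c ≤ c :=
      h.2 (mem_lb_pair (le_sub_iff_add_le.mp h1) (le_sub_iff_add_le.mp h2))
    exact add_le_iff_nonpos_left.mp this

private lemma my_glb_mono {a b a' b' : G} (h : IsGLB ({a, b} : Set G) 0)
    (ha0 : 0 ≤ a') (ha : a' ≤ a) (hb0 : 0 ≤ b') (hb : b' ≤ b) :
    IsGLB ({a', b'} : Set G) 0 := by
  constructor
  · rintro s (rfl | rfl) <;> assumption
  · intro t ht
    have h1 : t ≤ a' := ht (Set.mem_insert _ _)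
    have h2 : t ≤ b' := ht (Set.mem_insert_of_mem _ rfl)
    exact h.2 (mem_lb_pair (h1.trans ha) (h2.trans hb))

include hint

private lemma my_core {u v : G} (hu0 : 0 ≤ u) (huv : u ≤ v)
    (Pu : ∀ x ∈ Set.Icc (0 : G) u, ∀ y ∈ Set.Icc (0 : G) u,
      ∃ z ∈ Set.Icc (0 : G) u, IsLUB {x, y} z)
    (Pv : ∀ x ∈ Set.Icc (0 : G) v, ∀ y ∈ Set.Icc (0 : G) v,
      ∃ z ∈ Set.Icc (0 : G) v, IsLUB {x, y} z) :
    ∀ x ∈ Set.Icc (0 : G) (u + v), ∀ y ∈ Set.Icc (0 : G) (u + v),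
      ∃ z ∈ Set.Icc (0 : G) (u + v), IsLUB {x, y} z := by
  have hv0 : 0 ≤ v := hu0.trans huv
  intro x hx y hy
  obtain ⟨x1, x2, hxs, hx10, hx1u, hx20, hx2v⟩ := my_riesz hint hx.1 hu0 hv0 hx.2
  obtain ⟨y1, y2, hys, hy10, hy1u, hy20, hy2v⟩ := my_riesz hint hy.1 hu0 hv0 hy.2
  obtain ⟨s1, hs1m, hs1⟩ := Pu x1 ⟨hx10, hx1u⟩ y1 ⟨hy10, hy1u⟩
  obtain ⟨s2, hs2m, hs2⟩ := Pv x2 ⟨hx20, hx2v⟩ y2 ⟨hy20, hy2v⟩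
  have hx1s : x1 ≤ s1 := hs1.1 (Set.mem_insert _ _)
  have hy1s : y1 ≤ s1 := hs1.1 (Set.mem_insert_of_mem _ rfl)
  have hx2s : x2 ≤ s2 := hs2.1 (Set.mem_insert _ _)
  have hy2s : y2 ≤ s2 := hs2.1 (Set.mem_insert_of_mem _ rfl)
  have hde1 : IsGLB ({s1 - x1, s1 - y1} : Set G) 0 := my_glb_of_lub hs1
  have hde2 : IsGLB ({s2 - x2, s2 - y2} : Set G) 0 := my_glb_of_lub hs2
  -- cross infima
  have hd1v : s1 - x1 ∈ Set.Icc (0 : G) v :=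
    ⟨sub_nonneg.mpr hx1s, ((sub_le_self s1 hx10).trans hs1m.2).trans huv⟩
  have he1v : s1 - y1 ∈ Set.Icc (0 : G) v :=
    ⟨sub_nonneg.mpr hy1s, ((sub_le_self s1 hy10).trans hs1m.2).trans huv⟩
  have hd2v : s2 - x2 ∈ Set.Icc (0 : G) v :=
    ⟨sub_nonneg.mpr hx2s, (sub_le_self s2 hx20).trans hs2m.2⟩
  have he2v : s2 - y2 ∈ Set.Icc (0 : G) v :=
    ⟨sub_nonneg.mpr hy2s, (sub_le_self s2 hy20).trans hs2m.2⟩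
  obtain ⟨zc, _, hzc⟩ := Pv _ hd1v _ he2v
  obtain ⟨zc', _, hzc'⟩ := Pv _ hd2v _ he1v
  set c : G := (s1 - x1) + (s2 - y2) - zc with hc_def
  set c' : G := (s2 - x2) + (s1 - y1) - zc' with hc'_def
  have hc : IsGLB ({s1 - x1, s2 - y2} : Set G) c := my_isGLB_of_isLUB hzc
  have hc' : IsGLB ({s2 - x2, s1 - y1} : Set G) c' := my_isGLB_of_isLUB hzc'
  have hc0 : 0 ≤ c := hc.2 (mem_lb_pair hd1v.1 he2v.1)
  have hc'0 : 0 ≤ c' := hc'.2 (mem_lb_pair hd2v.1 he1v.1)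
  have hcd1 : c ≤ s1 - x1 := hc.1 (Set.mem_insert _ _)
  have hce2 : c ≤ s2 - y2 := hc.1 (Set.mem_insert_of_mem _ rfl)
  have hc'd2 : c' ≤ s2 - x2 := hc'.1 (Set.mem_insert _ _)
  have hc'e1 : c' ≤ s1 - y1 := hc'.1 (Set.mem_insert_of_mem _ rfl)
  set z : G := s1 + s2 - c - c' with hz_def
  have hzx : z - x = (s1 - x1 - c) + (s2 - x2 - c') := by
    rw [hz_def, hxs]; abel
  have hzy : z - y = (s1 - y1 - c') + (s2 - y2 - c) := by
    rw [hz_def, hys]; abel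
  -- the four disjointness relations
  have g11 : IsGLB ({s1 - x1 - c, s1 - y1 - c'} : Set G) 0 :=
    my_glb_mono hde1 (sub_nonneg.mpr hcd1) (sub_le_self _ hc0)
      (sub_nonneg.mpr hc'e1) (sub_le_self _ hc'0)
  have g12 : IsGLB ({s1 - x1 - c, s2 - y2 - c} : Set G) 0 := my_glb_sub hc
  have g21 : IsGLB ({s2 - x2 - c', s1 - y1 - c'} : Set G) 0 := my_glb_sub hc'
  have g22 : IsGLB ({s2 - x2 - c', s2 - y2 - c} : Set G) 0 :=
    my_glb_mono hde2 (sub_nonneg.mpr hc'd2) (sub_le_self _ hc'0)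
      (sub_nonneg.mpr hce2) (sub_le_self _ hc0)
  have ha1 : IsGLB ({s1 - x1 - c, (s1 - y1 - c') + (s2 - y2 - c)} : Set G) 0 :=
    my_glb_add hint g11 g12
  have ha2 : IsGLB ({s2 - x2 - c', (s1 - y1 - c') + (s2 - y2 - c)} : Set G) 0 :=
    my_glb_add hint g21 g22
  rw [Set.pair_comm] at ha1 ha2
  have hfin : IsGLB
      ({(s1 - y1 - c') + (s2 - y2 - c), (s1 - x1 - c) + (s2 - x2 - c')} : Set G) 0 :=
    my_glb_add hint ha1 ha2
  rw [Set.pair_comm] at hfin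
  have hzx0 : 0 ≤ z - x := by
    rw [hzx]
    exact add_nonneg (sub_nonneg.mpr hcd1) (sub_nonneg.mpr hc'd2)
  have hzy0 : 0 ≤ z - y := by
    rw [hzy]
    exact add_nonneg (sub_nonneg.mpr hc'e1) (sub_nonneg.mpr hce2)
  have hxz : x ≤ z := sub_nonneg.mp hzx0
  have hyz : y ≤ z := sub_nonneg.mp hzy0
  have hglb : IsGLB ({z - x, z - y} : Set G) 0 := by rw [hzx, hzy]; exact hfin
  refine ⟨z, ⟨hx.1.trans hxz, ?_⟩, my_lub_criterion hxz hyz hglb⟩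
  calc z ≤ s1 + s2 - c := sub_le_self _ hc'0
    _ ≤ s1 + s2 := sub_le_self _ hc0
    _ ≤ u + v := add_le_add hs1m.2 hs2m.2

end helpers

theorem stmt10 (G : Type*) [AddCommGroup G] [PartialOrder G]
    [CovariantClass G G (· + ·) (· ≤ ·)]
    (hint : ∀ a₀ a₁ b₀ b₁ : G, a₀ ≤ b₀ → a₀ ≤ b₁ → a₁ ≤ b₀ → a₁ ≤ b₁ →
      ∃ x : G, a₀ ≤ x ∧ a₁ ≤ x ∧ x ≤ b₀ ∧ x ≤ b₁)
    (U : Set G) (hUpos : U ⊆ {g : G | 0 ≤ g})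
    (hdir : ∀ x ∈ U, ∀ y ∈ U, ∃ z ∈ U, x ≤ z ∧ y ≤ z)
    (hlow : ∀ x ∈ U, ∀ p : G, 0 ≤ p → p ≤ x → p ∈ U)
    (hgen : AddSubgroup.closure U = ⊤)
    (hlat : ∀ u ∈ U, ∀ x ∈ Set.Icc (0 : G) u, ∀ y ∈ Set.Icc (0 : G) u,
      (∃ z ∈ Set.Icc (0 : G) u, IsLUB {x, y} z) ∧
        (∃ z ∈ Set.Icc (0 : G) u, IsGLB {x, y} z)) :
    ∀ x y : G, (∃ z : G, IsLUB {x, y} z) ∧ (∃ z : G, IsGLB {x, y} z) := by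
  -- trivial case: U empty
  by_cases hne : U.Nonempty
  case neg =>
    have hU : U = ∅ := Set.not_nonempty_iff_eq_empty.mp hne
    have hall : ∀ g : G, g = 0 := by
      intro g
      have : g ∈ AddSubgroup.closure U := hgen ▸ AddSubgroup.mem_top g
      rwa [hU, AddSubgroup.closure_empty, AddSubgroup.mem_bot] at this
    intro x y
    rw [hall x, hall y]
    have hlub : IsLUB ({(0 : G), 0} : Set G) 0 := by
      constructor
      · rintro s (rfl | rfl) <;> exact le_refl _
      · intro w hw; exact hw (Set.mem_insert _ _)
    have hglb : IsGLB ({(0 : G), 0} : Set G) 0 := by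
      constructor
      · rintro s (rfl | rfl) <;> exact le_refl _
      · intro w hw; exact hw (Set.mem_insert _ _)
    exact ⟨⟨0, hlub⟩, ⟨0, hglb⟩⟩
  case pos =>
  obtain ⟨u₀, hu₀⟩ := hne
  -- P (n • u) for every u ∈ U and n
  have key : ∀ u ∈ U, ∀ n : ℕ, ∀ x ∈ Set.Icc (0 : G) (n • u),
      ∀ y ∈ Set.Icc (0 : G) (n • u), ∃ z ∈ Set.Icc (0 : G) (n • u), IsLUB {x, y} z := by
    intro u hu n
    have hu0 : (0 : G) ≤ u := hUpos hu
    induction n with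
    | zero =>
      intro x hx y hy
      rw [zero_nsmul] at hx hy ⊢
      have hx0 : x = 0 := le_antisymm hx.2 hx.1
      have hy0 : y = 0 := le_antisymm hy.2 hy.1
      subst hx0; subst hy0
      refine ⟨0, ⟨le_refl _, le_refl _⟩, ?_⟩
      constructor
      · rintro s (rfl | rfl) <;> exact le_refl _
      · intro w hw; exact hw (Set.mem_insert _ _)
    | succ n ih =>
      rcases Nat.eq_zero_or_pos n with rfl | hn
      · -- 1 • u = u
        intro x hx y hy
        rw [one_nsmul] at hx hy ⊢
        exact ((hlat u hu x hx y hy).1)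
      · have huv : u ≤ n • u := by
          calc u = 1 • u := (one_nsmul u).symm
            _ ≤ n • u := nsmul_le_nsmul_left hu0 hn
        have Pu : ∀ x ∈ Set.Icc (0 : G) u, ∀ y ∈ Set.Icc (0 : G) u,
            ∃ z ∈ Set.Icc (0 : G) u, IsLUB {x, y} z :=
          fun x hx y hy => (hlat u hu x hx y hy).1
        have hres := my_core hint hu0 huv Pu ih
        intro x hx y hy
        rw [succ_nsmul, add_comm] at hx hy ⊢
        exact hres x hx y hy
  -- every element of G is a - b with a b in some [0, n • u]
  have bound : ∀ g : G, ∃ u ∈ U, ∃ n : ℕ, ∃ a b : G,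
      g = a - b ∧ a ∈ Set.Icc (0 : G) (n • u) ∧ b ∈ Set.Icc (0 : G) (n • u) := by
    intro g
    have hg : g ∈ AddSubgroup.closure U := hgen ▸ AddSubgroup.mem_top g
    induction hg using AddSubgroup.closure_induction with
    | mem x hx =>
      exact ⟨x, hx, 1, x, 0, by rw [sub_zero], ⟨hUpos hx, by rw [one_nsmul]⟩,
        ⟨le_refl _, by rw [one_nsmul]; exact hUpos hx⟩⟩
    | zero =>
      exact ⟨u₀, hu₀, 0, 0, 0, by rw [sub_zero], by rw [zero_nsmul]; exact ⟨le_refl _, le_refl _⟩,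
        by rw [zero_nsmul]; exact ⟨le_refl _, le_refl _⟩⟩
    | add x y hx hy ihx ihy =>
      obtain ⟨u1, hu1, n1, a1, b1, hxe, ha1, hb1⟩ := ihx
      obtain ⟨u2, hu2, n2, a2, b2, hye, ha2, hb2⟩ := ihy
      obtain ⟨u3, hu3, h13, h23⟩ := hdir u1 hu1 u2 hu2
      refine ⟨u3, hu3, n1 + n2, a1 + a2, b1 + b2, by rw [hxe, hye]; abel, ?_, ?_⟩
      · refine ⟨add_nonneg ha1.1 ha2.1, ?_⟩
        rw [add_nsmul]
        exact add_le_add (ha1.2.trans (nsmul_le_nsmul_right h13 n1))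
          (ha2.2.trans (nsmul_le_nsmul_right h23 n2))
      · refine ⟨add_nonneg hb1.1 hb2.1, ?_⟩
        rw [add_nsmul]
        exact add_le_add (hb1.2.trans (nsmul_le_nsmul_right h13 n1))
          (hb2.2.trans (nsmul_le_nsmul_right h23 n2))
    | neg x hx ihx =>
      obtain ⟨u1, hu1, n1, a1, b1, hxe, ha1, hb1⟩ := ihx
      exact ⟨u1, hu1, n1, b1, a1, by rw [hxe]; abel, hb1, ha1⟩
  -- conclude
  intro x y
  obtain ⟨u, hu, n, a, b, hxy, ha, hb⟩ := bound (x - y)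
  obtain ⟨z0, _, hz0⟩ := key u hu n a ha b hb
  have hlub' : IsLUB ({a + (y - b), b + (y - b)} : Set G) (z0 + (y - b)) :=
    my_lub_add hz0
  have hax : a + (y - b) = x := by
    have ha' : a = x - y + b := sub_eq_iff_eq_add.mp hxy.symm
    rw [ha']; abel
  have hby : b + (y - b) = y := by abel
  rw [hax, hby] at hlub'
  refine ⟨⟨z0 + (y - b), hlub'⟩, ⟨x + y - (z0 + (y - b)), my_isGLB_of_isLUB hlub'⟩⟩
end

section
/- There exists a dimension group G with order-unit u such that the index of u in the positive cone G⁺ equals 2 and G is not lattice-ordered. Concretely, let G be the group of all sequences x : ℕ → ℤ such that x_n = x_0 + x_1 for all sufficiently large n, ordered componentwise; then G is a dimension group, the element u with u_0 = u_1 = 1, u_n = 2 for n ≥ 2 is an order-unit of index 2, and the pair a, b ∈ G⁺ with a_0 = b_1 = 1, a_1 = b_0 = 0, a_n = b_n = 1 for n ≥ 2 has no infimum in G. -/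
/-!
All order relations are coordinatewise. For interpolation (and directedness) take the pointwise
maximum of the lower elements and, from a point `N` on where every given sequence already satisfies
`x n = x 0 + x 1`, replace it by the sum of its own coordinates `0` and `1`: the result lies in `G`
and stays between the given bounds because they satisfy the same tail relation. The index of `u` is
`2` since `u ≤ 2` with `u 2 = 2`, attained by the point mass at `2`. Finally, a lower bound `z ∈ G`
of `a` and `b` has `z 0 ≤ b 0 = 0` and `z 1 ≤ a 1 = 0`, so `z n ≤ 0` eventually; but the point mass
at any `n ≥ 2` is a lower bound of `a` and `b` in `G`, so no lower bound can dominate all of them.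
-/

/-- Membership in the group `G`: sequences eventually equal to `x 0 + x 1`. -/
def memG (x : ℕ → ℤ) : Prop := ∃ N : ℕ, ∀ n ≥ N, x n = x 0 + x 1

/-- The element `a`. -/
def aSeq : ℕ → ℤ := fun n => if n = 0 then 1 else if n = 1 then 0 else 1

/-- The element `b`. -/
def bSeq : ℕ → ℤ := fun n => if n = 0 then 0 else if n = 1 then 1 else 1

/-- The order-unit `u = a + b`. -/
def uSeq : ℕ → ℤ := aSeq + bSeq

open Filter

lemma memG.add {x y : ℕ → ℤ} (hx : memG x) (hy : memG y) : memG (x + y) := by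
  obtain ⟨N, hN⟩ := hx
  obtain ⟨M, hM⟩ := hy
  refine ⟨max N M, fun n hn => ?_⟩
  simp only [Pi.add_apply, hN n (le_of_max_le_left hn), hM n (le_of_max_le_right hn)]
  ring

lemma memG.neg {x : ℕ → ℤ} (hx : memG x) : memG (-x) := by
  obtain ⟨N, hN⟩ := hx
  exact ⟨N, fun n hn => by simp only [Pi.neg_apply, hN n hn, neg_add]⟩

lemma memG_single {k : ℕ} (hk : 2 ≤ k) (c : ℤ) : memG (Pi.single k c) :=
  ⟨k + 1, fun n hn => by simp [show n ≠ k by omega, show 0 ≠ k by omega, show 1 ≠ k by omega]⟩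

lemma memG.eventually_tail {x : ℕ → ℤ} (hx : memG x) :
    ∀ᶠ N in atTop, ∀ n ≥ N, x n = x 0 + x 1 := by
  obtain ⟨N, hN⟩ := hx
  exact eventually_atTop.2 ⟨N, fun M hM n hn => hN n (hM.trans hn)⟩

lemma memG.bddAbove_range {x : ℕ → ℤ} (hx : memG x) : BddAbove (Set.range x) := by
  obtain ⟨N, hN⟩ := hx
  exact (isBoundedUnder_of_eventually_le
    (eventually_atTop.2 ⟨N, fun n hn => (hN n hn).le⟩)).bddAbove_range

def patch (f : ℕ → ℤ) (N : ℕ) : ℕ → ℤ := fun n => if n < N then f n else f 0 + f 1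

lemma memG_patch (f : ℕ → ℤ) {N : ℕ} (hN : 2 ≤ N) : memG (patch f N) :=
  ⟨N, fun n hn => by simp [patch, show ¬n < N by omega, show 0 < N by omega, show 1 < N by omega]⟩

lemma le_patch {x f : ℕ → ℤ} {N : ℕ} (hxf : x ≤ f) (hx : ∀ n ≥ N, x n = x 0 + x 1) :
    x ≤ patch f N := by
  intro n
  by_cases hn : n < N
  · simpa [patch, hn] using hxf n
  · simpa [patch, hn, hx n (not_lt.1 hn)] using add_le_add (hxf 0) (hxf 1)

lemma patch_le {f y : ℕ → ℤ} {N : ℕ} (hfy : f ≤ y) (hy : ∀ n ≥ N, y n = y 0 + y 1) :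
    patch f N ≤ y := by
  intro n
  by_cases hn : n < N
  · simpa [patch, hn] using hfy n
  · simpa [patch, hn, hy n (not_lt.1 hn)] using add_le_add (hfy 0) (hfy 1)

lemma memG_directed {x y : ℕ → ℤ} (hx : memG x) (hy : memG y) :
    ∃ z, memG z ∧ x ≤ z ∧ y ≤ z := by
  obtain ⟨N, hN, hxN, hyN⟩ :=
    ((eventually_ge_atTop 2).and <| hx.eventually_tail.and hy.eventually_tail).exists
  exact ⟨patch (x ⊔ y) N, memG_patch _ hN, le_patch le_sup_left hxN, le_patch le_sup_right hyN⟩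

lemma memG_interpolation {a₀ a₁ b₀ b₁ : ℕ → ℤ} (ha₀ : memG a₀) (ha₁ : memG a₁)
    (hb₀ : memG b₀) (hb₁ : memG b₁)
    (h₀₀ : a₀ ≤ b₀) (h₀₁ : a₀ ≤ b₁) (h₁₀ : a₁ ≤ b₀) (h₁₁ : a₁ ≤ b₁) :
    ∃ x, memG x ∧ a₀ ≤ x ∧ a₁ ≤ x ∧ x ≤ b₀ ∧ x ≤ b₁ := by
  obtain ⟨N, hN, ha₀N, ha₁N, hb₀N, hb₁N⟩ := ((eventually_ge_atTop 2).and <|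
    ha₀.eventually_tail.and <| ha₁.eventually_tail.and <|
    hb₀.eventually_tail.and hb₁.eventually_tail).exists
  exact ⟨patch (a₀ ⊔ a₁) N, memG_patch _ hN, le_patch le_sup_left ha₀N,
    le_patch le_sup_right ha₁N, patch_le (sup_le h₀₀ h₁₀) hb₀N, patch_le (sup_le h₀₁ h₁₁) hb₁N⟩

lemma uSeq_apply (n : ℕ) : uSeq n = if n ≤ 1 then 1 else 2 := by
  rcases n with _ | _ | n <;> simp [uSeq, aSeq, bSeq]

lemma one_le_uSeq (n : ℕ) : 1 ≤ uSeq n := by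
  rw [uSeq_apply]; split_ifs <;> norm_num

lemma uSeq_le_two (n : ℕ) : uSeq n ≤ 2 := by
  rw [uSeq_apply]; split_ifs <;> norm_num

lemma memG_uSeq : memG uSeq :=
  ⟨2, fun n hn => by simp [uSeq_apply, show ¬n ≤ 1 by omega]⟩

lemma memG.exists_le_nsmul_uSeq {x : ℕ → ℤ} (hx : memG x) : ∃ n : ℕ, x ≤ n • uSeq := by
  obtain ⟨C, hC⟩ := hx.bddAbove_range
  refine ⟨C.toNat, fun k => ?_⟩
  calc x k ≤ C := hC ⟨k, rfl⟩
    _ ≤ C.toNat := Int.self_le_toNat C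
    _ ≤ C.toNat * uSeq k := le_mul_of_one_le_right (by positivity) (one_le_uSeq k)
    _ = (C.toNat • uSeq) k := by simp

lemma le_two_of_nsmul_le_uSeq {n : ℕ} {y : ℕ → ℤ} (hy : 0 ≤ y) (hy0 : y ≠ 0)
    (h : n • y ≤ uSeq) : n ≤ 2 := by
  obtain ⟨k, hk⟩ := Function.ne_iff.1 hy0
  have hyk : 1 ≤ y k := by have := hy k; simp only [Pi.zero_apply] at this hk; omega
  have : (n : ℤ) ≤ 2 := calc
    (n : ℤ) ≤ n * y k := le_mul_of_one_le_right (by positivity) hyk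
    _ = (n • y) k := by simp
    _ ≤ uSeq k := h k
    _ ≤ 2 := uSeq_le_two k
  exact_mod_cast this

lemma nsmul_single_two_le_uSeq {n : ℕ} (hn : n ≤ 2) : n • Pi.single 2 1 ≤ uSeq := by
  intro k
  by_cases hk : k = 2
  · subst hk
    simpa [uSeq_apply] using (Nat.cast_le (α := ℤ)).2 hn
  · simpa [hk] using (zero_le_one.trans (one_le_uSeq k))

lemma exists_nsmul_le_uSeq_iff (n : ℕ) :
    (∃ y, memG y ∧ 0 ≤ y ∧ y ≠ 0 ∧ n • y ≤ uSeq) ↔ n ≤ 2 :=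
  ⟨fun ⟨_, _, hy, hy0, h⟩ => le_two_of_nsmul_le_uSeq hy hy0 h, fun hn =>
    ⟨Pi.single 2 1, memG_single le_rfl 1, by simp, by simp, nsmul_single_two_le_uSeq hn⟩⟩

lemma memG_aSeq : memG aSeq :=
  ⟨2, fun n hn => by simp [aSeq, show n ≠ 0 by omega, show n ≠ 1 by omega]⟩

lemma memG_bSeq : memG bSeq :=
  ⟨2, fun n hn => by simp [bSeq, show n ≠ 0 by omega, show n ≠ 1 by omega]⟩

lemma aSeq_nonneg : 0 ≤ aSeq := fun n => by dsimp [aSeq]; split_ifs <;> norm_num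

lemma bSeq_nonneg : 0 ≤ bSeq := fun n => by dsimp [bSeq]; split_ifs <;> norm_num

lemma single_one_le {f : ℕ → ℤ} (hf : 0 ≤ f) {k : ℕ} (hk : 1 ≤ f k) : Pi.single k 1 ≤ f := by
  intro n
  by_cases hn : n = k
  · subst hn; simpa using hk
  · simpa [hn] using hf n

lemma single_le_aSeq {k : ℕ} (hk : 2 ≤ k) : Pi.single k 1 ≤ aSeq :=
  single_one_le aSeq_nonneg (by simp [aSeq, show k ≠ 0 by omega, show k ≠ 1 by omega])

lemma single_le_bSeq {k : ℕ} (hk : 2 ≤ k) : Pi.single k 1 ≤ bSeq :=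
  single_one_le bSeq_nonneg (by simp [bSeq, show k ≠ 0 by omega, show k ≠ 1 by omega])

lemma not_exists_inf_aSeq_bSeq :
    ¬∃ z, memG z ∧ z ≤ aSeq ∧ z ≤ bSeq ∧ ∀ w, memG w → w ≤ aSeq → w ≤ bSeq → w ≤ z := by
  rintro ⟨z, ⟨N, hN⟩, hza, hzb, hglb⟩
  have hz0 : z 0 ≤ 0 := by simpa [bSeq] using hzb 0
  have hz1 : z 1 ≤ 0 := by simpa [aSeq] using hza 1
  have hk : 2 ≤ max N 2 := le_max_right N 2
  have hzk : 1 ≤ z (max N 2) := by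
    simpa using hglb _ (memG_single hk 1) (single_le_aSeq hk) (single_le_bSeq hk) (max N 2)
  have := hN (max N 2) (le_max_left N 2)
  omega

theorem stmt11 :
    -- `G` is a subgroup of `ℕ → ℤ`
    (memG 0 ∧ (∀ x y, memG x → memG y → memG (x + y)) ∧ (∀ x, memG x → memG (-x))) ∧
    -- `G` is directed
    (∀ x y, memG x → memG y → ∃ z, memG z ∧ x ≤ z ∧ y ≤ z) ∧
    -- `G` is unperforated
    (∀ m : ℕ, 0 < m → ∀ x, memG x → 0 ≤ m • x → 0 ≤ x) ∧
    -- `G` has interpolation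
    (∀ a₀ a₁ b₀ b₁, memG a₀ → memG a₁ → memG b₀ → memG b₁ →
      a₀ ≤ b₀ → a₀ ≤ b₁ → a₁ ≤ b₀ → a₁ ≤ b₁ →
      ∃ x, memG x ∧ a₀ ≤ x ∧ a₁ ≤ x ∧ x ≤ b₀ ∧ x ≤ b₁) ∧
    -- `u` is an order-unit of `G`
    (memG uSeq ∧ 0 ≤ uSeq ∧ ∀ x, memG x → ∃ n : ℕ, x ≤ n • uSeq) ∧
    -- the index of `u` in `G⁺` is `2`
    (∀ n : ℕ, (∃ y, memG y ∧ 0 ≤ y ∧ y ≠ 0 ∧ n • y ≤ uSeq) ↔ n ≤ 2) ∧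
    -- `a` and `b` lie in `G⁺` and have no infimum in `G`
    (memG aSeq ∧ memG bSeq ∧ 0 ≤ aSeq ∧ 0 ≤ bSeq ∧
      ¬∃ z, memG z ∧ z ≤ aSeq ∧ z ≤ bSeq ∧
        ∀ w, memG w → w ≤ aSeq → w ≤ bSeq → w ≤ z) :=
  ⟨⟨⟨0, fun _ _ => by simp⟩, fun _ _ => memG.add, fun _ => memG.neg⟩,
    fun _ _ => memG_directed,
    fun _ hm _ _ h n => (nsmul_nonneg_iff hm.ne').1 (h n),
    fun _ _ _ _ => memG_interpolation,
    ⟨memG_uSeq, fun n => zero_le_one.trans (one_le_uSeq n), fun _ => memG.exists_le_nsmul_uSeq⟩,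
    exists_nsmul_le_uSeq_iff,
    ⟨memG_aSeq, memG_bSeq, aSeq_nonneg, bSeq_nonneg, not_exists_inf_aSeq_bSeq⟩⟩
end

section
/- Let S be a commutative semigroup satisfying: for all a, b ∈ S there exist u, v, c ∈ S with a = u + c and b = c + v. If S° (S with a new zero element adjoined) satisfies the refinement property, then S satisfies the refinement property. -/
/-- The refinement property for any additive structure. -/
def HasRefinementAdd (M : Type*) [Add M] : Prop :=
  ∀ a₀ a₁ b₀ b₁ : M, a₀ + a₁ = b₀ + b₁ →
    ∃ c₀₀ c₀₁ c₁₀ c₁₁ : M,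
      a₀ = c₀₀ + c₀₁ ∧ a₁ = c₁₀ + c₁₁ ∧ b₀ = c₀₀ + c₁₀ ∧ b₁ = c₀₁ + c₁₁

theorem stmt12 (S : Type*) [AddCommSemigroup S]
    (h : ∀ a b : S, ∃ u v c : S, a = u + c ∧ b = c + v)
    (href : HasRefinementAdd (WithZero S)) :
    HasRefinementAdd S := by
  intro a₀ a₁ b₀ b₁ hab
  obtain ⟨d₀₀, d₀₁, d₁₀, d₁₁, e₀, e₁, f₀, f₁⟩ :=
    href (a₀ : WithZero S) a₁ b₀ b₁ (by
      rw [← WithZero.coe_add, ← WithZero.coe_add, hab])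
  induction d₀₀ using WithZero.recZeroCoe with
  | zero =>
    rw [zero_add] at e₀ f₀
    -- d₀₁ = ↑a₀, d₁₀ = ↑b₀
    rw [← f₀] at e₁
    rw [← e₀] at f₁
    induction d₁₁ using WithZero.recZeroCoe with
    | zero =>
      rw [add_zero, WithZero.coe_inj] at e₁ f₁
      -- e₁ : a₁ = b₀, f₁ : b₁ = a₀
      obtain ⟨u, v, c, hu, hv⟩ := h a₀ a₁
      exact ⟨c, u, v, c, by rw [hu, add_comm], by rw [hv, add_comm], by
        rw [← e₁, hv], by rw [f₁, hu, add_comm]⟩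
    | coe e =>
      rw [← WithZero.coe_add, WithZero.coe_inj] at e₁ f₁
      -- e₁ : a₁ = b₀ + e, f₁ : b₁ = a₀ + e
      obtain ⟨u, v, c, hu, hv⟩ := h b₀ a₀
      refine ⟨c, v, u, c + e, ?_, ?_, ?_, ?_⟩
      · rw [hv, add_comm]
      · rw [e₁, hu, add_assoc]
      · rw [hu, add_comm]
      · rw [f₁, hv]; ac_rfl
  | coe s₀₀ =>
    induction d₀₁ using WithZero.recZeroCoe with
    | zero =>
      rw [add_zero, WithZero.coe_inj] at e₀
      rw [zero_add] at f₁
      rw [← f₁] at e₁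
      rw [← e₀] at f₀
      -- d₁₁ = ↑b₁, e₁ : ↑a₁ = d₁₀ + ↑b₁, f₀ : ↑b₀ = ↑a₀ + d₁₀
      induction d₁₀ using WithZero.recZeroCoe with
      | zero =>
        rw [zero_add, WithZero.coe_inj] at e₁
        rw [add_zero, WithZero.coe_inj] at f₀
        -- e₁ : a₁ = b₁, f₀ : b₀ = a₀
        obtain ⟨u, v, c, hu, hv⟩ := h a₀ a₁
        exact ⟨u, c, c, v, hu, hv, by rw [f₀, hu], by rw [← e₁, hv]⟩
      | coe e =>
        rw [← WithZero.coe_add, WithZero.coe_inj] at e₁ f₀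
        -- e₁ : a₁ = e + b₁, f₀ : b₀ = a₀ + e
        obtain ⟨u, v, c, hu, hv⟩ := h b₁ a₀
        refine ⟨v, c, c + e, u, ?_, ?_, ?_, ?_⟩
        · rw [hv, add_comm]
        · rw [e₁, hu]; ac_rfl
        · rw [f₀, hv, add_comm c v, add_assoc]
        · rw [hu, add_comm]
    | coe s₀₁ =>
      rw [← WithZero.coe_add, WithZero.coe_inj] at e₀
      induction d₁₀ using WithZero.recZeroCoe with
      | zero =>
        rw [add_zero, WithZero.coe_inj] at f₀
        rw [zero_add] at e₁
        rw [← e₁] at f₁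
        rw [← WithZero.coe_add, WithZero.coe_inj] at f₁
        -- e₀ : a₀ = s₀₀ + s₀₁, f₀ : b₀ = s₀₀, f₁ : b₁ = s₀₁ + a₁
        obtain ⟨u, v, c, hu, hv⟩ := h b₀ a₁
        refine ⟨u, c + s₀₁, c, v, ?_, ?_, ?_, ?_⟩
        · rw [e₀, ← f₀, hu, add_assoc, add_comm c s₀₁]
        · exact hv
        · exact hu
        · rw [f₁, hv, add_comm s₀₁ (c + v), add_assoc, add_comm v s₀₁, ← add_assoc]
      | coe s₁₀ =>
        rw [← WithZero.coe_add, WithZero.coe_inj] at f₀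
        induction d₁₁ using WithZero.recZeroCoe with
        | zero =>
          rw [add_zero, WithZero.coe_inj] at e₁
          rw [add_zero, WithZero.coe_inj] at f₁
          -- e₁ : a₁ = s₁₀, f₁ : b₁ = s₀₁, e₀ : a₀ = s₀₀ + s₀₁, f₀ : b₀ = s₀₀ + s₁₀
          obtain ⟨u, v, c, hu, hv⟩ := h b₁ a₁
          refine ⟨c + s₀₀, u, v, c, ?_, ?_, ?_, ?_⟩
          · rw [e₀, ← f₁, hu, add_comm u c, ← add_assoc, add_comm s₀₀ c]
          · rw [hv, add_comm]
          · rw [f₀, ← e₁, hv, add_comm s₀₀ (c + v), add_assoc, add_comm v s₀₀,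
              ← add_assoc]
          · exact hu
        | coe s₁₁ =>
          rw [← WithZero.coe_add, WithZero.coe_inj] at e₁ f₁
          exact ⟨s₀₀, s₀₁, s₁₀, s₁₁, e₀, e₁, f₀, f₁⟩
end

section
/- For every lattice L, the dimension monoid D(L) is conical, and Δ(a, b) = 0 if and only if a = b, for all a ≤ b in L. -/
/-- The defining relations of the dimension monoid of a lattice `L`, stated on the free
commutative monoid `Multiset (L × L)`: (D0) `Δ(a,a) = 0`; (D1) `Δ(a,c) = Δ(a,b) + Δ(b,c)`
whenever `a ≤ b ≤ c`; (D2) `Δ(a, a ⊔ b) = Δ(a ⊓ b, b)`. -/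
inductive DimRel (L : Type*) [Lattice L] : Multiset (L × L) → Multiset (L × L) → Prop
  | d0 (a : L) : DimRel L {(a, a)} 0
  | d1 (a b c : L) : a ≤ b → b ≤ c → DimRel L {(a, c)} ({(a, b)} + {(b, c)})
  | d2 (a b : L) : DimRel L {(a, a ⊔ b)} {(a ⊓ b, b)}

/-- The dimension monoid `D(L)` of a lattice `L`: the commutative monoid presented by
generators `Δ(a,b)` for `a ≤ b` in `L` and the relations (D0), (D1), (D2). -/
def DimMonoid (L : Type*) [Lattice L] : Type _ :=
  (addConGen (DimRel L)).Quotient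

instance (L : Type*) [Lattice L] : AddCommMonoid (DimMonoid L) :=
  inferInstanceAs (AddCommMonoid (addConGen (DimRel L)).Quotient)

/-- The dimension map `Δ : L × L → D(L)`. -/
def dimDelta {L : Type*} [Lattice L] (a b : L) : DimMonoid L :=
  AddCon.mk' (addConGen (DimRel L)) {(a, b)}

theorem stmt13 (L : Type*) [Lattice L] :
    (∀ x y : DimMonoid L, x + y = 0 → x = 0 ∧ y = 0) ∧
      (∀ a b : L, a ≤ b → (dimDelta a b = 0 ↔ a = b)) := by
  classical
  set G : Multiset (L × L) → Prop := fun s => ∀ p ∈ s, p.1 = p.2 with hG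
  -- the "all trivial" predicate is invariant under the congruence
  have key : ∀ {x y : Multiset (L × L)}, addConGen (DimRel L) x y → (G x ↔ G y) := by
    intro x y h
    refine (AddCon.addConGen_le (c := {
      r := fun x y => G x ↔ G y
      iseqv := ⟨fun _ => Iff.rfl, Iff.symm, Iff.trans⟩
      add' := by
        intro a b c d hab hcd
        simp only [hG, Multiset.mem_add] at *
        constructor
        · intro h
          intro p hp
          rcases hp with hp | hp
          · exact hab.mp (fun q hq => h q (Or.inl hq)) p hp
          · exact hcd.mp (fun q hq => h q (Or.inr hq)) p hp
        · intro h
          intro p hp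
          rcases hp with hp | hp
          · exact hab.mpr (fun q hq => h q (Or.inl hq)) p hp
          · exact hcd.mpr (fun q hq => h q (Or.inr hq)) p hp })).mpr ?_ h
    rintro x y (a | ⟨a, b, c, hab, hbc⟩ | ⟨a, b⟩) <;>
      simp only [hG, Multiset.mem_add, Multiset.mem_singleton, Multiset.notMem_zero,
        AddCon.rel_mk]
    · constructor <;> intro _
      · intro p hp; exact absurd hp not_false
      · intro p hp; subst hp; rfl
    · constructor
      · intro h p hp
        have hac : a = c := h (a, c) rfl
        have hb : a = b := le_antisymm hab (hac ▸ hbc)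
        rcases hp with hp | hp <;> subst hp
        · exact hb
        · exact hb ▸ hac
      · intro h p hp
        subst hp
        have h1 : a = b := h (a, b) (Or.inl rfl)
        have h2 : b = c := h (b, c) (Or.inr rfl)
        exact h1.trans h2
    · constructor
      · intro h p hp
        subst hp
        have h1 : a = a ⊔ b := h (a, a ⊔ b) rfl
        have hba : b ≤ a := le_sup_right.trans h1.symm.le
        exact inf_eq_right.mpr hba
      · intro h p hp
        subst hp
        have h1 : a ⊓ b = b := h (a ⊓ b, b) rfl
        have hba : b ≤ a := inf_eq_right.mp h1
        exact (sup_eq_left.mpr hba).symm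
  -- if all pairs are trivial then the class is zero
  have zero_of : ∀ s : Multiset (L × L), G s →
      (AddCon.mk' (addConGen (DimRel L)) s = 0) := by
    intro s
    induction s using Multiset.induction with
    | empty => intro _; rfl
    | cons p s ih =>
      intro h
      have hp : p.1 = p.2 := h p (Multiset.mem_cons_self _ _)
      have hs : AddCon.mk' (addConGen (DimRel L)) s = 0 :=
        ih (fun q hq => h q (Multiset.mem_cons_of_mem hq))
      have : (p ::ₘ s : Multiset (L × L)) = {p} + s := by
        simp [Multiset.singleton_add]
      rw [this, map_add, hs, add_zero]
      have hrel : addConGen (DimRel L) {p} 0 := by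
        refine AddConGen.Rel.of _ _ ?_
        obtain ⟨a, b⟩ := p
        cases hp
        exact DimRel.d0 a
      exact (AddCon.eq _).mpr hrel
  -- zero class means all pairs are trivial
  have of_zero : ∀ s : Multiset (L × L),
      AddCon.mk' (addConGen (DimRel L)) s = 0 → G s := by
    intro s h
    have hrel : addConGen (DimRel L) s 0 := (AddCon.eq _).mp h
    have := key hrel
    exact this.mpr (by intro p hp; exact absurd hp (Multiset.notMem_zero p))
  constructor
  · intro x y hxy
    obtain ⟨s, rfl⟩ := AddCon.mk'_surjective x
    obtain ⟨t, rfl⟩ := AddCon.mk'_surjective y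
    have hsum : AddCon.mk' (addConGen (DimRel L)) (s + t) = 0 := by
      rw [map_add]; exact hxy
    have h := of_zero _ hsum
    constructor
    · exact zero_of s (fun p hp => h p (Multiset.mem_add.mpr (Or.inl hp)))
    · exact zero_of t (fun p hp => h p (Multiset.mem_add.mpr (Or.inr hp)))
  · intro a b _
    constructor
    · intro h
      exact of_zero {(a, b)} h (a, b) (Multiset.mem_singleton_self _)
    · rintro rfl
      exact zero_of {(a, a)} (by intro p hp; rw [Multiset.mem_singleton] at hp; subst hp; rfl)
end

section
/- Let L be a lattice and extend Δ to all pairs by Δ(a,b) = Δ(a∧b, a∨b). Then the triangle inequality Δ(a,c) ≤ Δ(a,b) + Δ(b,c) holds in the dimension monoid D(L) (with respect to the algebraic preordering), for all a, b, c ∈ L. -/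
/-- The extension of `Δ` to arbitrary pairs: `Δ(a,b) = Δ(a ⊓ b, a ⊔ b)`. -/
def dimDeltaE {L : Type*} [Lattice L] (a b : L) : DimMonoid L :=
  dimDelta (a ⊓ b) (a ⊔ b)


lemma dim_d1 {L : Type*} [Lattice L] {a b c : L} (h1 : a ≤ b) (h2 : b ≤ c) :
    dimDelta a c = dimDelta a b + dimDelta b c := by
  have x := (AddCon.eq (addConGen (DimRel L))).2 (AddConGen.Rel.of _ _ (DimRel.d1 a b c h1 h2))
  have y : (AddCon.mk' (addConGen (DimRel L)) ({(a,b)} + {(b,c)}) : DimMonoid L) =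
      dimDelta a b + dimDelta b c := map_add _ _ _
  exact x.trans y

lemma dim_d2 {L : Type*} [Lattice L] (a b : L) :
    dimDelta a (a ⊔ b) = dimDelta (a ⊓ b) b :=
  (AddCon.eq _).2 (AddConGen.Rel.of _ _ (DimRel.d2 a b))

theorem stmt14 (L : Type*) [Lattice L] (a b c : L) :
    ∃ z : DimMonoid L, dimDeltaE a c + z = dimDeltaE a b + dimDeltaE b c := by
  set p := a ⊓ b ⊓ c with hp
  set q := a ⊔ b ⊔ c with hq
  set m := (a ⊓ b) ⊔ (b ⊓ c) with hm
  set n := (a ⊔ b) ⊓ (b ⊔ c) with hn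
  refine ⟨dimDelta p (a ⊓ c) + dimDelta (a ⊔ c) q + dimDelta m b + dimDelta b n, ?_⟩
  have hpac : p ≤ a ⊓ c := le_inf (inf_le_left.trans inf_le_left) inf_le_right
  have hacq : a ⊔ c ≤ q := sup_le (le_sup_left.trans le_sup_left) le_sup_right
  have hpb : p ≤ b := inf_le_left.trans inf_le_right
  have hbq : b ≤ q := le_sup_right.trans le_sup_left
  have hpbc : p ≤ b ⊓ c := le_inf (inf_le_left.trans inf_le_right) inf_le_right
  have hmb : m ≤ b := sup_le inf_le_right inf_le_left
  have hbn : b ≤ n := le_inf le_sup_right le_sup_left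
  have e1 : dimDelta p q = dimDelta p (a ⊓ c) + dimDelta (a ⊓ c) (a ⊔ c) +
      dimDelta (a ⊔ c) q := by
    rw [dim_d1 hpac ((inf_le_sup).trans hacq), dim_d1 inf_le_sup hacq]; abel
  have e2 : dimDelta p q = dimDelta p b + dimDelta b q := dim_d1 hpb hbq
  have e3 : dimDelta p b = dimDelta p (b ⊓ c) + dimDelta (b ⊓ c) b :=
    dim_d1 hpbc inf_le_left
  have e4 : dimDelta p (b ⊓ c) = dimDelta (a ⊓ b) m := by
    have h : (a ⊓ b) ⊓ (b ⊓ c) = p := by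
      rw [hp, inf_assoc, ← inf_assoc b b c, inf_idem, ← inf_assoc]
    rw [← h]
    exact (dim_d2 (a ⊓ b) (b ⊓ c)).symm
  have e5 : dimDelta b q = dimDelta b (a ⊔ b) + dimDelta (a ⊔ b) q :=
    dim_d1 le_sup_right le_sup_left
  have e6 : dimDelta (a ⊔ b) q = dimDelta n (b ⊔ c) := by
    have h : (a ⊔ b) ⊔ (b ⊔ c) = q := by
      rw [hq, sup_assoc, ← sup_assoc b b c, sup_idem, ← sup_assoc]
    rw [← h]
    exact dim_d2 (a ⊔ b) (b ⊔ c)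
  have r1 : dimDelta (a ⊓ b) (a ⊔ b) = dimDelta (a ⊓ b) b + dimDelta b (a ⊔ b) :=
    dim_d1 inf_le_right le_sup_right
  have r2 : dimDelta (b ⊓ c) (b ⊔ c) = dimDelta (b ⊓ c) b + dimDelta b (b ⊔ c) :=
    dim_d1 inf_le_left le_sup_left
  have r3 : dimDelta (a ⊓ b) b = dimDelta (a ⊓ b) m + dimDelta m b :=
    dim_d1 le_sup_left hmb
  have r4 : dimDelta b (b ⊔ c) = dimDelta b n + dimDelta n (b ⊔ c) :=
    dim_d1 hbn (inf_le_right)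
  have key : dimDelta p (a ⊓ c) + dimDelta (a ⊓ c) (a ⊔ c) + dimDelta (a ⊔ c) q
      = dimDelta (a ⊓ b) m + dimDelta (b ⊓ c) b + (dimDelta b (a ⊔ b) + dimDelta n (b ⊔ c)) := by
    calc dimDelta p (a ⊓ c) + dimDelta (a ⊓ c) (a ⊔ c) + dimDelta (a ⊔ c) q
        = dimDelta p q := e1.symm
      _ = dimDelta p b + dimDelta b q := e2
      _ = (dimDelta p (b ⊓ c) + dimDelta (b ⊓ c) b) +
          (dimDelta b (a ⊔ b) + dimDelta (a ⊔ b) q) := by rw [e3, e5]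
      _ = dimDelta (a ⊓ b) m + dimDelta (b ⊓ c) b +
          (dimDelta b (a ⊔ b) + dimDelta n (b ⊔ c)) := by rw [e4, e6]
  show dimDelta (a ⊓ c) (a ⊔ c) +
      (dimDelta p (a ⊓ c) + dimDelta (a ⊔ c) q + dimDelta m b + dimDelta b n)
      = dimDelta (a ⊓ b) (a ⊔ b) + dimDelta (b ⊓ c) (b ⊔ c)
  rw [r1, r2, r3, r4]
  calc dimDelta (a ⊓ c) (a ⊔ c) +
      (dimDelta p (a ⊓ c) + dimDelta (a ⊔ c) q + dimDelta m b + dimDelta b n)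
      = (dimDelta p (a ⊓ c) + dimDelta (a ⊓ c) (a ⊔ c) + dimDelta (a ⊔ c) q)
        + dimDelta m b + dimDelta b n := by abel
    _ = _ := by rw [key]; abel
end

section
/- Let L be a lattice such that every element of the dimension range of L is directly finite in D(L). Then L is modular. -/
/-!
If `L` is not modular, it contains `a < b` and `y` with `a ⊓ y = b ⊓ y` and `a ⊔ y = b ⊔ y`.
Then (D2) and (D1) give
`Δ(b ⊓ y, y) = Δ(a, a ⊔ y) = Δ(a, b) + Δ(b, b ⊔ y) = Δ(a, b) + Δ(b ⊓ y, y)`,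
so direct finiteness of `Δ(b ⊓ y, y)` forces `Δ(a, b) = 0`. But `Δ(a, b) = 0` only when
`a = b`: "every pair in the multiset is diagonal" is invariant under the defining relations.
-/

theorem isModularLattice_of_eq_of_inf_eq_of_sup_eq {L : Type*} [Lattice L]
    (h : ∀ a b y : L, a ≤ b → a ⊓ y = b ⊓ y → a ⊔ y = b ⊔ y → a = b) :
    IsModularLattice L := by
  refine ⟨fun {x} y {z} hxz => ?_⟩
  have hle : x ⊔ y ⊓ z ≤ (x ⊔ y) ⊓ z :=
    sup_le (le_inf le_sup_left hxz) (inf_le_inf_right z le_sup_right)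
  refine (h _ _ y hle ?_ ?_).ge
  · exact le_antisymm (inf_le_inf_right y hle)
      (le_inf (le_sup_of_le_right (le_inf inf_le_right (inf_le_left.trans inf_le_right)))
        inf_le_right)
  · exact le_antisymm (sup_le_sup_right hle y)
      (sup_le (inf_le_left.trans (sup_le_sup_right le_sup_left y)) le_sup_right)

namespace DimMonoid

def diagonalCon (L : Type*) : AddCon (Multiset (L × L)) where
  r s t := (∀ p ∈ s, p.1 = p.2) ↔ (∀ p ∈ t, p.1 = p.2)
  iseqv := ⟨fun _ => Iff.rfl, Iff.symm, Iff.trans⟩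
  add' {s₁ t₁ s₂ t₂} h₁ h₂ := by
    simp only [Multiset.mem_add, or_imp, forall_and] at h₁ h₂ ⊢
    rw [h₁, h₂]

variable {L : Type*} [Lattice L]

theorem dimRel_le_diagonalCon : DimRel L ≤ ⇑(diagonalCon L) := by
  intro s t h
  show (∀ p ∈ s, p.1 = p.2) ↔ (∀ p ∈ t, p.1 = p.2)
  cases h with
  | d0 a => simp
  | d1 a b c hab hbc =>
    simp only [Multiset.mem_add, Multiset.mem_singleton, forall_eq_or_imp, forall_eq]
    exact ⟨fun hac => ⟨le_antisymm hab (hac ▸ hbc), le_antisymm hbc (hac ▸ hab)⟩,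
      fun ⟨hab, hbc⟩ => hab.trans hbc⟩
  | d2 a b => simp [eq_comm (a := a), sup_eq_left, inf_eq_right]

theorem dimDelta_eq_zero_iff {a b : L} : dimDelta a b = 0 ↔ a = b := by
  constructor
  · intro h
    have hrel : addConGen (DimRel L) {(a, b)} 0 := (AddCon.eq _).1 h
    have hdiag : diagonalCon L {(a, b)} 0 := AddCon.addConGen_le.2 dimRel_le_diagonalCon hrel
    simpa [diagonalCon] using hdiag
  · rintro rfl
    exact (AddCon.eq _).2 (AddConGen.Rel.of _ _ (DimRel.d0 a))

theorem dimDelta_add_dimDelta {a b c : L} (hab : a ≤ b) (hbc : b ≤ c) :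
    dimDelta a b + dimDelta b c = dimDelta a c :=
  ((AddCon.eq _).2 (AddConGen.Rel.of _ _ (DimRel.d1 a b c hab hbc))).symm

theorem dimDelta_sup (a b : L) : dimDelta a (a ⊔ b) = dimDelta (a ⊓ b) b :=
  (AddCon.eq _).2 (AddConGen.Rel.of _ _ (DimRel.d2 a b))

theorem dimDelta_add_dimDelta_inf_eq {a b y : L} (hab : a ≤ b) (hinf : a ⊓ y = b ⊓ y)
    (hsup : a ⊔ y = b ⊔ y) : dimDelta a b + dimDelta (b ⊓ y) y = dimDelta (b ⊓ y) y := by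
  calc dimDelta a b + dimDelta (b ⊓ y) y = dimDelta a b + dimDelta b (b ⊔ y) := by
        rw [dimDelta_sup]
    _ = dimDelta a (b ⊔ y) := dimDelta_add_dimDelta hab le_sup_left
    _ = dimDelta (b ⊓ y) y := by rw [← hsup, dimDelta_sup, hinf]

end DimMonoid

open DimMonoid in
theorem stmt16 (L : Type*) [Lattice L]
    (hdf : ∀ a b : L, a ≤ b → ∀ x : DimMonoid L, x + dimDelta a b = dimDelta a b → x = 0) :
    IsModularLattice L :=
  isModularLattice_of_eq_of_inf_eq_of_sup_eq fun _ _ _ hab hinf hsup =>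
    dimDelta_eq_zero_iff.1 <|
      hdf _ _ inf_le_right _ (dimDelta_add_dimDelta_inf_eq hab hinf hsup)
end

section
/- Let L be a sectionally complemented modular lattice and let a, b, c be elements such that (a∨b) ∧ (b∨c) = b. If a ∼ b and b ∼ c, then a ∼ c. -/
/-!
Refine each perspectivity to an axis: a common complement `s` of `a` and `b` inside `[⊥, a ⊔ b]`,
and likewise `t` for `b` and `c` (this is where sectional complementation enters). Then `s ⊔ t` is
an axis of perspectivity from `a` to `c`. Both joins equal `a ⊔ b ⊔ c`; for the meets, modularity
and `(a ⊔ b) ⊓ (b ⊔ c) = b` give `(a ⊔ b) ⊓ t = b ⊓ t = ⊥`, so `a` stays disjoint from `s ⊔ t`.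
-/

section Lattice

variable {L : Type*} [Lattice L]

theorem sup_eq_sup_of_inf_sup_eq {x s t : L} (h : x ⊓ s ⊔ t = s) : x ⊔ t = x ⊔ s := by
  rw [← h, ← sup_assoc, sup_inf_self]

variable [OrderBot L]

theorem disjoint_of_disjoint_inf_of_le {x s t : L} (hts : t ≤ s) (h : Disjoint (x ⊓ s) t) :
    Disjoint x t :=
  disjoint_iff_inf_le.2 <| (le_inf (inf_le_inf_left x hts) inf_le_right).trans h.le_bot

def Perspective (x y : L) : Prop :=
  ∃ s, x ⊓ s = y ⊓ s ∧ x ⊔ s = y ⊔ s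

structure IsPerspectivityAxis (x y s : L) : Prop where
  disjoint_left : Disjoint x s
  disjoint_right : Disjoint y s
  sup_left : x ⊔ s = x ⊔ y
  sup_right : y ⊔ s = x ⊔ y

theorem IsPerspectivityAxis.perspective {x y s : L} (h : IsPerspectivityAxis x y s) :
    Perspective x y :=
  ⟨s, by rw [h.disjoint_left.eq_bot, h.disjoint_right.eq_bot], h.sup_left.trans h.sup_right.symm⟩

theorem exists_disjoint_sup_eq_of_inf_eq
    (hsc : ∀ a b : L, a ≤ b → ∃ x : L, a ⊓ x = ⊥ ∧ a ⊔ x = b)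
    {x y s : L} (h : x ⊓ s = y ⊓ s) :
    ∃ t, Disjoint x t ∧ Disjoint y t ∧ x ⊔ t = x ⊔ s ∧ y ⊔ t = y ⊔ s := by
  obtain ⟨t, hdisj, hsup⟩ := hsc (x ⊓ s) s inf_le_right
  have hts : t ≤ s := hsup ▸ le_sup_right
  refine ⟨t, ?_, ?_, sup_eq_sup_of_inf_sup_eq hsup, sup_eq_sup_of_inf_sup_eq (h ▸ hsup)⟩
  · exact disjoint_of_disjoint_inf_of_le hts (disjoint_iff.2 hdisj)
  · exact disjoint_of_disjoint_inf_of_le hts (disjoint_iff.2 (h ▸ hdisj))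

variable [IsModularLattice L]

theorem Perspective.exists_isPerspectivityAxis
    (hsc : ∀ a b : L, a ≤ b → ∃ x : L, a ⊓ x = ⊥ ∧ a ⊔ x = b)
    {x y : L} (hxy : Perspective x y) : ∃ s, IsPerspectivityAxis x y s := by
  obtain ⟨s, hinf, hsup⟩ := hxy
  have hxs : x ⊔ y ≤ x ⊔ s := sup_le le_sup_left (hsup ▸ le_sup_left)
  have hys : x ⊔ y ≤ y ⊔ s := hsup ▸ hxs
  have hinf' : x ⊓ (s ⊓ (x ⊔ y)) = y ⊓ (s ⊓ (x ⊔ y)) := by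
    rw [← inf_assoc, ← inf_assoc, hinf]
  obtain ⟨t, hxt, hyt, hxsup, hysup⟩ := exists_disjoint_sup_eq_of_inf_eq hsc hinf'
  refine ⟨t, hxt, hyt, ?_, ?_⟩
  · rw [hxsup, ← sup_inf_assoc_of_le s le_sup_left, inf_eq_right.2 hxs]
  · rw [hysup, ← sup_inf_assoc_of_le s le_sup_right, inf_eq_right.2 hys]

theorem IsPerspectivityAxis.perspective_of_sup_inf_sup_eq {a b c s t : L}
    (hs : IsPerspectivityAxis a b s) (ht : IsPerspectivityAxis b c t)
    (h : (a ⊔ b) ⊓ (b ⊔ c) = b) : Perspective a c := by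
  have hs_le : s ≤ a ⊔ b := hs.sup_left ▸ le_sup_right
  have ht_le : t ≤ b ⊔ c := ht.sup_left ▸ le_sup_right
  have hat : Disjoint (a ⊔ s) t := by
    have : Disjoint ((a ⊔ b) ⊓ (b ⊔ c)) t := by rw [h]; exact ht.disjoint_left
    exact hs.sup_left ▸ disjoint_of_disjoint_inf_of_le ht_le this
  have hcs : Disjoint (c ⊔ t) s := by
    have : Disjoint ((b ⊔ c) ⊓ (a ⊔ b)) s := by rw [inf_comm, h]; exact hs.disjoint_right
    exact ht.sup_right ▸ disjoint_of_disjoint_inf_of_le hs_le this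
  have ha : Disjoint a (s ⊔ t) := hs.disjoint_left.disjoint_sup_right_of_disjoint_sup_left hat
  have hc : Disjoint c (s ⊔ t) :=
    sup_comm t s ▸ ht.disjoint_right.disjoint_sup_right_of_disjoint_sup_left hcs
  have hasup : a ⊔ (s ⊔ t) = a ⊔ (b ⊔ c) := by
    rw [← sup_assoc, hs.sup_left, sup_assoc, ht.sup_left]
  have hcsup : c ⊔ (s ⊔ t) = c ⊔ (a ⊔ b) := by
    rw [sup_comm s, ← sup_assoc, ht.sup_right, sup_comm b, sup_assoc, hs.sup_right]
  refine ⟨s ⊔ t, by rw [ha.eq_bot, hc.eq_bot], ?_⟩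
  rw [hasup, hcsup]
  ac_rfl

end Lattice

theorem stmt18 (L : Type*) [Lattice L] [OrderBot L] [IsModularLattice L]
    (hsc : ∀ a b : L, a ≤ b → ∃ x : L, a ⊓ x = ⊥ ∧ a ⊔ x = b)
    (a b c : L) (h : (a ⊔ b) ⊓ (b ⊔ c) = b)
    (hab : ∃ s : L, a ⊓ s = b ⊓ s ∧ a ⊔ s = b ⊔ s)
    (hbc : ∃ s : L, b ⊓ s = c ⊓ s ∧ b ⊔ s = c ⊔ s) :
    ∃ s : L, a ⊓ s = c ⊓ s ∧ a ⊔ s = c ⊔ s := by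
  obtain ⟨s, hs⟩ := Perspective.exists_isPerspectivityAxis hsc hab
  obtain ⟨t, ht⟩ := Perspective.exists_isPerspectivityAxis hsc hbc
  exact hs.perspective_of_sup_inf_sup_eq ht h
end
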